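/- arXiv:1904.10191 — 4 statements merged into one kernel-verified Lean document; each statement's English description precedes it below -/
import Mathlib

section
/- With h_r as defined (sum over integer tuples with x_i ≡ i mod n and Σx_i = r of ∏_{i<j}(x_i - x_j) times q^{(Σx_i²)/(2n) - r²/(2n²)}), one has h_{r + n²} = h_r for all integers r; i.e., h_r depends only on r modulo n². -/
open Complex

/-- The series `h_r(τ)` of the paper: sum over integer tuples `(x_1,…,x_n)` with
`x_i ≡ i (mod n)` and `x_1+⋯+x_n = r` of `∏_{i<j}(x_i-x_j) q^{(∑ x_i²)/(2n) - r²/(2n²)}`,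
with `q^s = exp(2πiτs)`. -/
noncomputable def hr (n : ℕ) (r : ℤ) (τ : ℂ) : ℂ :=
  ∑' x : {x : Fin n → ℤ // (∀ i, x i ≡ (i : ℕ) + 1 [ZMOD n]) ∧ ∑ i, x i = r},
    (∏ i, ∏ j ∈ Finset.Ioi i, ((x.1 i : ℂ) - (x.1 j : ℂ))) *
      Complex.exp (2 * Real.pi * Complex.I * τ *
        ((∑ i, (x.1 i : ℂ) ^ 2) / (2 * n) - (r : ℂ) ^ 2 / (2 * (n : ℂ) ^ 2)))

/-- Shifting every coordinate by `n` gives a bijection between the index sets for `r`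
and for `r + n²`. -/
def shiftEquiv (n : ℕ) (r : ℤ) :
    {x : Fin n → ℤ // (∀ i, x i ≡ (i : ℕ) + 1 [ZMOD n]) ∧ ∑ i, x i = r} ≃
    {x : Fin n → ℤ // (∀ i, x i ≡ (i : ℕ) + 1 [ZMOD n]) ∧ ∑ i, x i = r + (n : ℤ) ^ 2} where
  toFun x := ⟨fun i => x.1 i + n,
    fun i => by have h := x.2.1 i; simp [Int.ModEq] at h ⊢; omega,
    by
      have h := x.2.2
      simp [Finset.sum_add_distrib, h, Finset.card_univ]
      ring⟩
  invFun x := ⟨fun i => x.1 i - n,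
    fun i => by have h := x.2.1 i; simp [Int.ModEq] at h ⊢; omega,
    by
      have h := x.2.2
      simp [Finset.sum_sub_distrib, h, Finset.card_univ]
      ring⟩
  left_inv x := by ext i; simp
  right_inv x := by ext i; simp

theorem stmt_6 (n : ℕ) (hn : Odd n) (hpos : 0 < n) (r : ℤ) (τ : ℂ) (hτ : 0 < τ.im) :
    hr n (r + (n : ℤ) ^ 2) τ = hr n r τ := by
  have hnC : (n : ℂ) ≠ 0 := Nat.cast_ne_zero.mpr hpos.ne'
  unfold hr
  rw [← Equiv.tsum_eq (shiftEquiv n r)]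
  refine tsum_congr fun x => ?_
  obtain ⟨x, hcong, hsum⟩ := x
  have hx : (∑ i, (x i : ℂ)) = (r : ℂ) := by
    rw [← Int.cast_sum, hsum]
  simp only [shiftEquiv, Equiv.coe_fn_mk]
  have expand : ∑ i, (((x i + (n : ℤ)) : ℤ) : ℂ) ^ 2
      = (∑ i, (x i : ℂ) ^ 2) + 2 * n * (r : ℂ) + (n : ℂ) ^ 2 * n := by
    have h1 : ∑ i, (((x i + (n : ℤ)) : ℤ) : ℂ) ^ 2
        = ∑ i, ((x i : ℂ) ^ 2 + 2 * (n : ℂ) * (x i : ℂ) + (n : ℂ) ^ 2) := by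
      refine Finset.sum_congr rfl fun i _ => ?_
      push_cast
      ring
    rw [h1, Finset.sum_add_distrib, Finset.sum_add_distrib, ← Finset.mul_sum, hx,
      Finset.sum_const, Finset.card_univ, Fintype.card_fin, nsmul_eq_mul]
    ring
  congr 1
  · refine Finset.prod_congr rfl fun i _ => Finset.prod_congr rfl fun j _ => ?_
    push_cast
    ring
  · congr 1
    rw [expand]
    push_cast
    field_simp
    ring
end

section
/- With h_r as defined for odd positive n, one has h_{r+n} = h_r for all integers r. Consequently h_r = h_0 for all r divisible by n, and h_r = 0 otherwise. -/
open Complex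

lemma vdm {n : ℕ} (g : Fin n → ℂ) (σ : Equiv.Perm (Fin n)) (hσ : Equiv.Perm.sign σ = 1) :
    ∏ i, ∏ j ∈ Finset.Ioi i, (g (σ i) - g (σ j)) = ∏ i, ∏ j ∈ Finset.Ioi i, (g i - g j) := by
  have key : ∀ v : Fin n → ℂ, ∏ i, ∏ j ∈ Finset.Ioi i, (v i - v j)
      = (∏ i : Fin n, ∏ j ∈ Finset.Ioi i, (-1 : ℂ)) * (Matrix.vandermonde v).det := by
    intro v
    rw [Matrix.det_vandermonde, ← Finset.prod_mul_distrib]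
    refine Finset.prod_congr rfl fun i _ => ?_
    rw [← Finset.prod_mul_distrib]
    exact Finset.prod_congr rfl fun j _ => by ring
  have hperm : (Matrix.vandermonde (g ∘ σ)).det = (Matrix.vandermonde g).det := by
    have h1 : Matrix.vandermonde (g ∘ σ) = (Matrix.vandermonde g).submatrix σ id := by
      ext i j; simp [Matrix.vandermonde]
    rw [h1, Matrix.det_permute, hσ]
    simp
  calc ∏ i, ∏ j ∈ Finset.Ioi i, (g (σ i) - g (σ j))
      = ∏ i, ∏ j ∈ Finset.Ioi i, ((g ∘ σ) i - (g ∘ σ) j) := rfl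
    _ = (∏ i : Fin n, ∏ j ∈ Finset.Ioi i, (-1 : ℂ)) * (Matrix.vandermonde (g ∘ σ)).det := key _
    _ = _ := by rw [hperm, ← key]

lemma hr_period (n : ℕ) (hn : Odd n) (hpos : 0 < n) (r : ℤ) (τ : ℂ) :
    hr n (r + (n : ℤ)) τ = hr n r τ := by
  classical
  obtain ⟨m, rfl⟩ : ∃ m, n = m + 1 := ⟨n - 1, by omega⟩
  set σ : Equiv.Perm (Fin (m + 1)) := finRotate (m + 1) with hσdef
  have hsign : Equiv.Perm.sign σ⁻¹ = 1 := by
    have hm : Even m := by rcases hn with ⟨k, hk⟩; exact ⟨k, by omega⟩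
    rw [hσdef, map_inv, sign_finRotate, Nat.add_sub_cancel, hm.neg_one_pow, inv_one]
  -- congruence of values: for j with σ j = i, ((j:ℕ)+1 : ℤ) ≡ (i:ℕ) [ZMOD (m+1)]
  have hcong : ∀ j : Fin (m + 1),
      (((j : ℕ) : ℤ) + 1) ≡ (((σ j : Fin (m + 1)) : ℕ) : ℤ) [ZMOD ((m : ℤ) + 1)] := by
    intro j
    have hσj : σ j = j + 1 := by rw [hσdef]; exact finRotate_succ_apply j
    rcases Nat.lt_or_ge (j : ℕ) m with h | h
    · have hval : ((σ j : Fin (m + 1)) : ℕ) = (j : ℕ) + 1 := by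
        rw [hσj, Fin.val_add_one_of_lt]
        rw [Fin.lt_def, Fin.val_last]; exact h
      rw [hval]; push_cast; rfl
    · have hjm : (j : ℕ) = m := by have := j.isLt; omega
      have hjlast : j = Fin.last m := Fin.ext (by rw [hjm, Fin.val_last])
      have hval : ((σ j : Fin (m + 1)) : ℕ) = 0 := by
        rw [hσj, hjlast, Fin.last_add_one, Fin.val_zero]
      rw [hval, hjm]
      rw [Int.modEq_iff_dvd]
      exact ⟨-1, by push_cast; ring⟩
  have hmod : ∀ (x : Fin (m + 1) → ℤ), (∀ i, x i ≡ (i : ℕ) + 1 [ZMOD ((m : ℕ) + 1 : ℕ)]) →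
      ∀ i, x (σ⁻¹ i) + 1 ≡ (i : ℕ) + 1 [ZMOD ((m : ℕ) + 1 : ℕ)] := by
    intro x hx i
    have h1 : x (σ⁻¹ i) + 1 ≡ (((σ⁻¹ i : Fin (m + 1)) : ℕ) + 1) + 1 [ZMOD ((m : ℕ) + 1 : ℕ)] :=
      (hx (σ⁻¹ i)).add_right 1
    refine h1.trans ?_
    have h2 := hcong (σ⁻¹ i)
    rw [← Equiv.Perm.mul_apply, mul_inv_cancel, Equiv.Perm.one_apply] at h2
    have h3 : (((σ⁻¹ i : Fin (m + 1)) : ℕ) : ℤ) + 1 + 1 ≡ ((i : ℕ) : ℤ) + 1 [ZMOD ((m : ℤ) + 1)] :=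
      h2.add_right 1
    have : (((m : ℕ) + 1 : ℕ) : ℤ) = (m : ℤ) + 1 := by push_cast; ring
    rw [this]
    exact_mod_cast h3
  have hmod' : ∀ (y : Fin (m + 1) → ℤ), (∀ i, y i ≡ (i : ℕ) + 1 [ZMOD ((m : ℕ) + 1 : ℕ)]) →
      ∀ i, y (σ i) - 1 ≡ (i : ℕ) + 1 [ZMOD ((m : ℕ) + 1 : ℕ)] := by
    intro y hy i
    have h1 : y (σ i) - 1 ≡ (((σ i : Fin (m + 1)) : ℕ) + 1) - 1 [ZMOD ((m : ℕ) + 1 : ℕ)] :=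
      (hy (σ i)).sub_right 1
    refine h1.trans ?_
    have h2 := (hcong i).symm
    have h3 : (((σ i : Fin (m + 1)) : ℕ) : ℤ) + 1 - 1 ≡ ((i : ℕ) : ℤ) + 1 [ZMOD ((m : ℤ) + 1)] := by
      have := h2.sub_right 0
      simpa using h2
    have : (((m : ℕ) + 1 : ℕ) : ℤ) = (m : ℤ) + 1 := by push_cast; ring
    rw [this]
    exact_mod_cast h3
  have hsum : ∀ (x : Fin (m + 1) → ℤ), (∑ i, x i = r) →
      ∑ i, (x (σ⁻¹ i) + 1) = r + ((m : ℕ) + 1 : ℕ) := by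
    intro x hx
    rw [Finset.sum_add_distrib, Equiv.sum_comp σ⁻¹ x, hx]
    simp
  have hsum' : ∀ (y : Fin (m + 1) → ℤ), (∑ i, y i = r + ((m : ℕ) + 1 : ℕ)) →
      ∑ i, (y (σ i) - 1) = r := by
    intro y hy
    rw [Finset.sum_sub_distrib, Equiv.sum_comp σ y, hy]
    simp
  set P := fun (s : ℤ) => {x : Fin (m + 1) → ℤ //
    (∀ i, x i ≡ (i : ℕ) + 1 [ZMOD ((m : ℕ) + 1 : ℕ)]) ∧ ∑ i, x i = s} with hP
  let E : P r ≃ P (r + ((m : ℕ) + 1 : ℕ)) :=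
    { toFun := fun x => ⟨fun i => x.1 (σ⁻¹ i) + 1, hmod x.1 x.2.1, hsum x.1 x.2.2⟩
      invFun := fun y => ⟨fun i => y.1 (σ i) - 1, hmod' y.1 y.2.1, hsum' y.1 y.2.2⟩
      left_inv := fun x => by ext i; simp
      right_inv := fun y => by ext i; simp }
  rw [hr, hr, ← Equiv.tsum_eq E]
  apply tsum_congr
  intro x
  have hprod : (∏ i, ∏ j ∈ Finset.Ioi i, (((E x).1 i : ℂ) - ((E x).1 j : ℂ)))
      = ∏ i, ∏ j ∈ Finset.Ioi i, ((x.1 i : ℂ) - (x.1 j : ℂ)) := by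
    have key : ∀ i j : Fin (m + 1), (((E x).1 i : ℂ) - ((E x).1 j : ℂ))
        = ((x.1 (σ⁻¹ i) : ℂ) - (x.1 (σ⁻¹ j) : ℂ)) := by
      intro i j
      show (((x.1 (σ⁻¹ i) + 1 : ℤ) : ℂ) - ((x.1 (σ⁻¹ j) + 1 : ℤ) : ℂ)) = _
      push_cast; ring
    calc ∏ i, ∏ j ∈ Finset.Ioi i, (((E x).1 i : ℂ) - ((E x).1 j : ℂ))
        = ∏ i, ∏ j ∈ Finset.Ioi i, ((x.1 (σ⁻¹ i) : ℂ) - (x.1 (σ⁻¹ j) : ℂ)) :=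
          Finset.prod_congr rfl fun i _ => Finset.prod_congr rfl fun j _ => key i j
      _ = _ := vdm (fun i => (x.1 i : ℂ)) σ⁻¹ hsign
  have hexp : ((∑ i, ((E x).1 i : ℂ) ^ 2) / (2 * ((m : ℕ) + 1 : ℕ))
        - ((r + ((m : ℕ) + 1 : ℕ) : ℤ) : ℂ) ^ 2 / (2 * (((m : ℕ) + 1 : ℕ) : ℂ) ^ 2))
      = ((∑ i, (x.1 i : ℂ) ^ 2) / (2 * ((m : ℕ) + 1 : ℕ))
        - (r : ℂ) ^ 2 / (2 * (((m : ℕ) + 1 : ℕ) : ℂ) ^ 2)) := by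
    have hsq : (∑ i, ((E x).1 i : ℂ) ^ 2) = ∑ i, ((x.1 i : ℂ) + 1) ^ 2 := by
      have h1 : ∀ i, ((E x).1 i : ℂ) ^ 2 = ((x.1 (σ⁻¹ i) : ℂ) + 1) ^ 2 := by
        intro i
        show (((x.1 (σ⁻¹ i) + 1 : ℤ) : ℂ)) ^ 2 = _
        push_cast; ring
      rw [Finset.sum_congr rfl fun i _ => h1 i]
      exact Equiv.sum_comp σ⁻¹ (fun i => ((x.1 i : ℂ) + 1) ^ 2)
    have hxsum : (∑ i, (x.1 i : ℂ)) = (r : ℂ) := by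
      have := x.2.2
      exact_mod_cast congrArg (Int.cast : ℤ → ℂ) this
    have hexpand : ∑ i, ((x.1 i : ℂ) + 1) ^ 2
        = (∑ i, (x.1 i : ℂ) ^ 2) + 2 * (r : ℂ) + ((m : ℂ) + 1) := by
      have h2 : ∀ i : Fin (m + 1), ((x.1 i : ℂ) + 1) ^ 2
          = (x.1 i : ℂ) ^ 2 + 2 * (x.1 i : ℂ) + 1 := fun i => by ring
      rw [Finset.sum_congr rfl fun i _ => h2 i, Finset.sum_add_distrib, Finset.sum_add_distrib,
        ← Finset.mul_sum, hxsum, Finset.sum_const, Finset.card_univ, Fintype.card_fin]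
      push_cast
      ring
    have hNe : ((m : ℂ) + 1) ≠ 0 := by
      have : ((m + 1 : ℕ) : ℂ) ≠ 0 := Nat.cast_ne_zero.mpr (Nat.succ_ne_zero m)
      push_cast at this; exact this
    rw [hsq, hexpand]
    push_cast
    field_simp
    ring
  rw [hprod, hexp]

lemma hr_zero_of_not_dvd (n : ℕ) (hn : Odd n) (hpos : 0 < n) (r : ℤ) (τ : ℂ)
    (h : ¬ (n : ℤ) ∣ r) : hr n r τ = 0 := by
  -- the index type is empty
  have hS : (n : ℤ) ∣ ∑ i : Fin n, (((i : ℕ) : ℤ) + 1) := by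
    obtain ⟨k, hk⟩ := hn
    have e0 : (∑ i : Fin n, (((i : ℕ) : ℤ) + 1)) = ((∑ i ∈ Finset.range n, (i + 1) : ℕ) : ℤ) := by
      rw [← Fin.sum_univ_eq_sum_range (fun i => i + 1) n]
      push_cast
      rfl
    have e1 : (∑ i ∈ Finset.range n, (i + 1)) * 2 = n * (n - 1) + n * 2 := by
      rw [Finset.sum_add_distrib, Finset.sum_const, Finset.card_range, smul_eq_mul, mul_one,
        add_mul, Finset.sum_range_id_mul_two]
    have e2 : (∑ i ∈ Finset.range n, (i + 1)) * 2 = ((2 * k + 1) * (k + 1)) * 2 := by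
      rw [e1, hk]
      have : 2 * k + 1 - 1 = 2 * k := by omega
      rw [this]; ring
    have e3 : (∑ i ∈ Finset.range n, (i + 1)) = (2 * k + 1) * (k + 1) :=
      Nat.eq_of_mul_eq_mul_right two_pos e2
    refine ⟨(k : ℤ) + 1, ?_⟩
    rw [e0, e3, hk]
    push_cast
    ring
  have hempty : IsEmpty {x : Fin n → ℤ //
      (∀ i, x i ≡ (i : ℕ) + 1 [ZMOD n]) ∧ ∑ i, x i = r} := by
    constructor
    rintro ⟨x, hx, hsum⟩
    apply h
    have hmod : r % (n : ℤ) = (∑ i : Fin n, (((i : ℕ) : ℤ) + 1)) % (n : ℤ) := by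
      rw [← hsum, Finset.sum_int_mod, Finset.sum_congr rfl (fun i _ => hx i),
        ← Finset.sum_int_mod]
    rw [Int.dvd_iff_emod_eq_zero, hmod, ← Int.dvd_iff_emod_eq_zero]
    exact hS
  rw [hr]
  exact tsum_empty

theorem stmt_7 (n : ℕ) (hn : Odd n) (hpos : 0 < n) (r : ℤ) (τ : ℂ) (hτ : 0 < τ.im) :
    hr n (r + (n : ℤ)) τ = hr n r τ ∧
    ((n : ℤ) ∣ r → hr n r τ = hr n 0 τ) ∧
    (¬ (n : ℤ) ∣ r → hr n r τ = 0) := by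
  refine ⟨hr_period n hn hpos r τ, ?_, hr_zero_of_not_dvd n hn hpos r τ⟩
  rintro ⟨k, rfl⟩
  induction k using Int.induction_on with
  | zero => rw [mul_zero]
  | succ i ih =>
      rw [show (n : ℤ) * ((i : ℤ) + 1) = (n : ℤ) * (i : ℤ) + (n : ℤ) by ring,
        hr_period n hn hpos ((n : ℤ) * (i : ℤ)) τ, ih]
  | pred i ih =>
      have h1 := hr_period n hn hpos ((n : ℤ) * (-(i : ℤ) - 1)) τ
      rw [show (n : ℤ) * (-(i : ℤ) - 1) + (n : ℤ) = (n : ℤ) * (-(i : ℤ)) by ring] at h1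
      rw [← h1, ih]
end

section
/- For odd positive n, the minimal exponent of q appearing in the series Σ_{x_i ≡ i (mod n), Σx_i = 0} ∏_{i<j}(x_i - x_j) q^{(x_1²+...+x_n²)/(2n)} is (n²-1)/24, attained exactly at the tuple which is a permutation of {-(n-1)/2, ..., (n-1)/2}; in particular, every tuple of integers (x_1,...,x_n) with x_i ≡ i (mod n) and x_1 + ... + x_n = 0 satisfies x_1² + ... + x_n² ≥ n(n²-1)/12. -/
/-! The congruences make `i ↦ x i mod n` a bijection onto `ZMod n`. Replacing each `x i` by the
representative of its residue of least absolute value (`ZMod.valMinAbs`) can only decrease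
`x i ^ 2`, and strictly unless `|x i| ≤ (n - 1) / 2`. These representatives run exactly over
`[-(n - 1) / 2, (n - 1) / 2]`, whose squares sum to `n (n ^ 2 - 1) / 12`. -/

open Finset Function

theorem Int.three_mul_sum_Icc_neg_sq (m : ℕ) :
    3 * ∑ v ∈ Icc (-m : ℤ) m, v ^ 2 = m * (m + 1) * (2 * m + 1) := by
  induction m with
  | zero => simp
  | succ m ih =>
    have hIcc : Icc (-(m + 1 : ℕ) : ℤ) (m + 1 : ℕ) =
        insert (-(m + 1 : ℤ)) (insert (m + 1 : ℤ) (Icc (-m : ℤ) m)) := by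
      ext v; simp only [mem_insert, mem_Icc]; push_cast; omega
    rw [hIcc, sum_insert (by simp; omega), sum_insert (by simp), mul_add, mul_add, ih]
    push_cast; ring

namespace ZMod

section

variable {n : ℕ} [NeZero n]

theorem valMinAbs_sq_le_sq (a : ℤ) : (a : ZMod n).valMinAbs ^ 2 ≤ a ^ 2 :=
  Int.natAbs_le_iff_sq_le.1 <|
    natAbs_min_of_le_div_two n _ a (coe_valMinAbs _) (natAbs_valMinAbs_le _)

theorem valMinAbs_sq_eq_sq_iff (a : ℤ) :
    (a : ZMod n).valMinAbs ^ 2 = a ^ 2 ↔ a.natAbs ≤ n / 2 := by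
  rw [← Int.natAbs_eq_iff_sq_eq]
  refine ⟨fun h => h ▸ natAbs_valMinAbs_le _, fun h => le_antisymm ?_ ?_⟩
  · exact natAbs_min_of_le_div_two n _ a (coe_valMinAbs _) (natAbs_valMinAbs_le _)
  · exact natAbs_min_of_le_div_two n a _ (coe_valMinAbs _).symm h

end

theorem valMinAbs_intCast_of_natAbs_le {m : ℕ} {a : ℤ} (h : a.natAbs ≤ m) :
    (a : ZMod (2 * m + 1)).valMinAbs = a :=
  (valMinAbs_spec _ _).2 ⟨rfl, by rw [Set.mem_Ioc]; push_cast; omega⟩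

theorem image_valMinAbs (m : ℕ) :
    univ.image (valMinAbs : ZMod (2 * m + 1) → ℤ) = Icc (-m : ℤ) m := by
  refine eq_of_subset_of_card_le (fun v hv => ?_) ?_
  · obtain ⟨z, -, rfl⟩ := mem_image.1 hv
    have := natAbs_valMinAbs_le z
    rw [mem_Icc]; omega
  · rw [card_image_of_injective _ injective_valMinAbs, card_univ, ZMod.card, Int.card_Icc]
    omega

theorem twelve_mul_sum_valMinAbs_sq (m : ℕ) :
    12 * ∑ z : ZMod (2 * m + 1), z.valMinAbs ^ 2 = (2 * m + 1) * ((2 * m + 1) ^ 2 - 1) := by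
  rw [← sum_image (f := (· ^ 2)) injective_valMinAbs.injOn, image_valMinAbs]
  linear_combination 4 * Int.three_mul_sum_Icc_neg_sq m

end ZMod

theorem range_eq_Icc_iff_of_bijective_intCast {ι : Type*} {m : ℕ} (x : ι → ℤ)
    (hx : Bijective fun i => (x i : ZMod (2 * m + 1))) :
    Set.range x = Set.Icc (-m : ℤ) m ↔ ∀ i, (x i).natAbs ≤ m := by
  refine ⟨fun h i => ?_, fun h => ?_⟩
  · have := h.subset (Set.mem_range_self i)
    rw [Set.mem_Icc] at this
    omega
  · have hx_eq : x = fun i => (x i : ZMod (2 * m + 1)).valMinAbs :=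
      funext fun i => (ZMod.valMinAbs_intCast_of_natAbs_le (h i)).symm
    rw [hx_eq, ← comp_def ZMod.valMinAbs, hx.2.range_comp, ← Set.image_univ, ← coe_univ,
      ← coe_image, ZMod.image_valMinAbs, coe_Icc]

theorem twelve_mul_sum_sq_of_bijective_intCast {ι : Type*} [Fintype ι] {m : ℕ} (x : ι → ℤ)
    (hx : Bijective fun i => (x i : ZMod (2 * m + 1))) :
    (2 * m + 1 : ℤ) * ((2 * m + 1) ^ 2 - 1) ≤ 12 * ∑ i, x i ^ 2 ∧
    (12 * ∑ i, x i ^ 2 = (2 * m + 1 : ℤ) * ((2 * m + 1) ^ 2 - 1) ↔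
      Set.range x = Set.Icc (-m : ℤ) m) := by
  have hle (i : ι) := ZMod.valMinAbs_sq_le_sq (n := 2 * m + 1) (x i)
  rw [← ZMod.twelve_mul_sum_valMinAbs_sq, ← hx.sum_comp (fun z => z.valMinAbs ^ 2)]
  refine ⟨by gcongr 12 * ?_; exact sum_le_sum fun i _ => hle i, ?_⟩
  calc 12 * ∑ i, x i ^ 2 = 12 * ∑ i, (x i : ZMod (2 * m + 1)).valMinAbs ^ 2
        ↔ ∑ i, (x i : ZMod (2 * m + 1)).valMinAbs ^ 2 = ∑ i, x i ^ 2 := by omega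
    _ ↔ ∀ i, (x i : ZMod (2 * m + 1)).valMinAbs ^ 2 = x i ^ 2 := by
        simpa using sum_eq_sum_iff_of_le (s := univ) fun i _ => hle i
    _ ↔ ∀ i, (x i).natAbs ≤ m := by
        simp only [ZMod.valMinAbs_sq_eq_sq_iff, Nat.mul_add_div two_pos,
          Nat.div_eq_of_lt one_lt_two, add_zero]
    _ ↔ _ := (range_eq_Icc_iff_of_bijective_intCast x hx).symm

theorem stmt_14_general (n : ℕ) (hn : Odd n) (x : Fin n → ℤ)
    (hx : ∀ i : Fin n, x i ≡ (i : ℕ) + 1 [ZMOD n]) :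
    (n : ℤ) * ((n : ℤ) ^ 2 - 1) ≤ 12 * ∑ i, x i ^ 2 ∧
    (12 * ∑ i, x i ^ 2 = (n : ℤ) * ((n : ℤ) ^ 2 - 1) ↔
      Set.range x = Set.Icc (-(((n : ℤ) - 1) / 2)) (((n : ℤ) - 1) / 2)) := by
  obtain ⟨m, rfl⟩ := hn
  have hresidue (i : Fin (2 * m + 1)) :
      (x i : ZMod (2 * m + 1)) = ((i : ℕ) : ZMod (2 * m + 1)) + 1 := by
    rw [(ZMod.intCast_eq_intCast_iff _ _ _).2 (hx i)]; push_cast; rfl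
  have hinj : Injective fun i : Fin (2 * m + 1) => (x i : ZMod (2 * m + 1)) := by
    intro i j hij
    simp only [hresidue, add_left_inj] at hij
    rw [ZMod.natCast_eq_natCast_iff', Nat.mod_eq_of_lt i.isLt, Nat.mod_eq_of_lt j.isLt] at hij
    exact Fin.ext hij
  have hbij := (Fintype.bijective_iff_injective_and_card _).2 ⟨hinj, by simp⟩
  have hhalf : (((2 * m + 1 : ℕ) : ℤ) - 1) / 2 = m := by omega
  rw [hhalf]
  push_cast
  exact twelve_mul_sum_sq_of_bijective_intCast x hbij

theorem stmt_14 (n : ℕ) (hn : Odd n) (hpos : 0 < n) (x : Fin n → ℤ)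
    (hx : ∀ i : Fin n, x i ≡ (i : ℕ) + 1 [ZMOD n]) (hsum : ∑ i, x i = 0) :
    (n : ℤ) * ((n : ℤ) ^ 2 - 1) ≤ 12 * ∑ i, x i ^ 2 ∧
    (12 * ∑ i, x i ^ 2 = (n : ℤ) * ((n : ℤ) ^ 2 - 1) ↔
      Set.range x = Set.Icc (-(((n : ℤ) - 1) / 2)) (((n : ℤ) - 1) / 2)) :=
  stmt_14_general n hn x hx
end

section
/- The matrix group Γ = { γ ∈ SL₂(ℤ) : γ ≡ I or γ ≡ [[0,1],[1,0]] (mod 2) } is a subgroup of SL₂(ℤ) of index 3, and it is generated by S = [[0,-1],[1,0]] and T² = [[1,2],[0,1]]. -/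
open Matrix MatrixGroups

instance : DecidableEq SL(2, ZMod 2) := by unfold Matrix.SpecialLinearGroup; infer_instance
instance : Fintype SL(2, ZMod 2) := by unfold Matrix.SpecialLinearGroup; infer_instance

private def w2 : SL(2, ZMod 2) := ⟨!![0,1;1,0], by decide⟩

private def Hsub : Subgroup SL(2, ZMod 2) where
  carrier := {1, w2}
  one_mem' := by left; rfl
  mul_mem' := by intro a b ha hb; revert ha hb; revert a b; decide
  inv_mem' := by intro a ha; revert ha; revert a; decide

private def fmod : SL(2, ℤ) →* SL(2, ZMod 2) :=
  Matrix.SpecialLinearGroup.map (Int.castRingHom (ZMod 2))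

private lemma fmod_coe (γ : SL(2,ℤ)) : ((fmod γ) : Matrix (Fin 2) (Fin 2) (ZMod 2)) =
    (γ : Matrix (Fin 2) (Fin 2) ℤ).map (Int.cast : ℤ → ZMod 2) := rfl

private lemma mem_iff' (γ : SL(2,ℤ)) : γ ∈ Hsub.comap fmod ↔
    ((γ : Matrix (Fin 2) (Fin 2) ℤ).map (Int.cast : ℤ → ZMod 2) = 1 ∨
     (γ : Matrix (Fin 2) (Fin 2) ℤ).map (Int.cast : ℤ → ZMod 2) = !![0, 1; 1, 0]) := by
  have : γ ∈ Hsub.comap fmod ↔ fmod γ = 1 ∨ fmod γ = w2 := Iff.rfl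
  rw [this]
  exact Iff.or Subtype.ext_iff Subtype.ext_iff

private lemma fmod_surj : Function.Surjective fmod := by
  have h : ∀ x : SL(2, ZMod 2),
      x = fmod 1 ∨ x = fmod ⟨!![0,-1;1,0], by decide⟩ ∨ x = fmod ⟨!![1,1;0,1], by decide⟩ ∨
      x = fmod ⟨!![1,0;1,1], by decide⟩ ∨ x = fmod ⟨!![0,-1;1,1], by decide⟩ ∨
      x = fmod ⟨!![1,1;-1,0], by decide⟩ := by decide
  intro x
  rcases h x with h|h|h|h|h|h <;> exact ⟨_, h.symm⟩

private instance : DecidablePred (· ∈ Hsub) := fun x => decidable_of_iff (x = 1 ∨ x = w2) Iff.rfl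

private lemma index_eq' : (Hsub.comap fmod).index = 3 := by
  rw [Subgroup.index_comap, MonoidHom.range_eq_top.mpr fmod_surj, Subgroup.relIndex_top_right]
  have h1 : Nat.card SL(2, ZMod 2) = 6 := by rw [Nat.card_eq_fintype_card]; decide
  have h2 : Nat.card Hsub = 2 := by rw [Nat.card_eq_fintype_card]; decide
  have h3 := Subgroup.card_mul_index Hsub
  rw [h1, h2] at h3
  omega

private lemma reduce (a c : ℤ) (hc : c ≠ 0) (hpar : ¬ (2 ∣ (a + c))) :
    ∃ q : ℤ, |a - 2*q*c| < |c| := by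
  rcases hc.lt_or_gt with hneg | hpos
  · obtain ⟨k, r, hr0, hr2, heq⟩ : ∃ k r : ℤ, 0 ≤ r ∧ r < -(2*c) ∧ a = -(2*c)*k + r :=
      ⟨a / (-(2*c)), a % (-(2*c)), Int.emod_nonneg _ (by omega), Int.emod_lt_of_pos _ (by omega),
        by linarith [Int.mul_ediv_add_emod a (-(2*c))]⟩
    obtain ⟨t, ht⟩ : ∃ t : ℤ, a = 2*t + r := ⟨-(c*k), by linear_combination heq⟩
    by_cases hlt : r < -c
    · refine ⟨-k, ?_⟩
      have he : a - 2*(-k)*c = r := by linear_combination heq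
      rw [he, abs_of_nonneg hr0, abs_of_neg hneg]; exact hlt
    · refine ⟨-k - 1, ?_⟩
      have he : a - 2*(-k - 1)*c = r + 2*c := by linear_combination heq
      have hne : r ≠ -c := by omega
      rw [he, abs_of_neg hneg, abs_lt]
      omega
  · obtain ⟨k, r, hr0, hr2, heq⟩ : ∃ k r : ℤ, 0 ≤ r ∧ r < 2*c ∧ a = 2*c*k + r :=
      ⟨a / (2*c), a % (2*c), Int.emod_nonneg _ (by omega), Int.emod_lt_of_pos _ (by omega),
        by linarith [Int.mul_ediv_add_emod a (2*c)]⟩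
    obtain ⟨t, ht⟩ : ∃ t : ℤ, a = 2*t + r := ⟨c*k, by linear_combination heq⟩
    by_cases hlt : r < c
    · refine ⟨k, ?_⟩
      have he : a - 2*k*c = r := by linear_combination heq
      rw [he, abs_of_nonneg hr0, abs_of_pos hpos]; exact hlt
    · refine ⟨k + 1, ?_⟩
      have he : a - 2*(k + 1)*c = r - 2*c := by linear_combination heq
      have hne : r ≠ c := by omega
      rw [he, abs_of_pos hpos, abs_lt]
      omega

open ModularGroup

private lemma Tpow (k : ℤ) : ((T^(2:ℕ) : SL(2,ℤ)))^k = T^(2*k) := by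
  rw [← zpow_natCast T 2, ← _root_.zpow_mul]
  norm_num

private lemma key (q : ℤ) (γ : SL(2,ℤ)) :
    (S * (T^(2*(-q)) * γ)).1 1 0 = γ.1 0 0 - 2*q*γ.1 1 0 := by
  rw [Matrix.SpecialLinearGroup.coe_mul, Matrix.SpecialLinearGroup.coe_mul, coe_T_zpow, coe_S,
    Matrix.eta_fin_two γ.1, Matrix.mul_fin_two, Matrix.mul_fin_two]
  simp
  ring

private lemma parity (γ : SL(2,ℤ)) (h : γ ∈ Hsub.comap fmod) :
    ¬ (2 ∣ (γ.1 0 0 + γ.1 1 0)) := by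
  rw [mem_iff'] at h
  intro hdvd
  have hz : ((γ.1 0 0 + γ.1 1 0 : ℤ) : ZMod 2) = 0 :=
    (ZMod.intCast_zmod_eq_zero_iff_dvd _ 2).mpr (by exact_mod_cast hdvd)
  push_cast at hz
  rcases h with h | h <;>
  · have h1 := congrFun (congrFun h 0) 0
    have h2 := congrFun (congrFun h 1) 0
    simp [Matrix.map_apply, Matrix.one_apply] at h1 h2
    rw [h1, h2] at hz
    exact absurd hz (by decide)

private lemma case0 (γ : SL(2,ℤ)) (h : γ ∈ Hsub.comap fmod) (hc : γ.1 1 0 = 0) :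
    (2 ∣ γ.1 0 1) ∧ ((γ.1 0 0 = 1 ∧ γ.1 1 1 = 1) ∨ (γ.1 0 0 = -1 ∧ γ.1 1 1 = -1)) := by
  have hdet := γ.2
  rw [Matrix.det_fin_two, hc] at hdet
  simp only [mul_zero, sub_zero] at hdet
  rw [mem_iff'] at h
  rcases h with h | h
  · refine ⟨?_, Int.mul_eq_one_iff_eq_one_or_neg_one.mp hdet⟩
    have h1 := congrFun (congrFun h 0) 1
    simp [Matrix.map_apply, Matrix.one_apply] at h1
    exact_mod_cast (ZMod.intCast_zmod_eq_zero_iff_dvd _ 2).mp (by exact_mod_cast h1)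
  · have h2 := congrFun (congrFun h 1) 0
    simp [Matrix.map_apply, hc] at h2

theorem stmt_16 :
    ∃ Γ : Subgroup SL(2, ℤ),
      (∀ γ : SL(2, ℤ), γ ∈ Γ ↔
        ((γ : Matrix (Fin 2) (Fin 2) ℤ).map (Int.cast : ℤ → ZMod 2) = 1 ∨
         (γ : Matrix (Fin 2) (Fin 2) ℤ).map (Int.cast : ℤ → ZMod 2) = !![0, 1; 1, 0])) ∧
      Γ.index = 3 ∧
      Γ = Subgroup.closure {ModularGroup.S, ModularGroup.T ^ 2} := by
  set C := Subgroup.closure {S, T ^ 2} with hC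
  have hSC : S ∈ C := Subgroup.subset_closure (Set.mem_insert _ _)
  have hT2C : T ^ 2 ∈ C := Subgroup.subset_closure (Set.mem_insert_of_mem _ rfl)
  have hSΓ : S ∈ Hsub.comap fmod := by rw [mem_iff']; right; decide
  have hT2Γ : T ^ 2 ∈ Hsub.comap fmod := by rw [mem_iff']; left; decide
  have main : ∀ n : ℕ, ∀ γ : SL(2,ℤ), γ ∈ Hsub.comap fmod → (γ.1 1 0).natAbs = n → γ ∈ C := by
    intro n
    induction n using Nat.strong_induction_on with
    | _ n ih =>
      intro γ hγ hn
      by_cases hc : γ.1 1 0 = 0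
      · obtain ⟨⟨m, hb⟩, had⟩ := case0 γ hγ hc
        rcases had with ⟨ha, hd⟩ | ⟨ha, hd⟩
        · have : γ = T^(2*m) := by
            apply Subtype.ext
            rw [coe_T_zpow, Matrix.eta_fin_two γ.1, ha, hb, hc, hd]
          rw [this, ← Tpow]
          exact zpow_mem hT2C m
        · have : γ = S^2 * T^(2*(-m)) := by
            apply Subtype.ext
            rw [Matrix.SpecialLinearGroup.coe_mul, pow_two, Matrix.SpecialLinearGroup.coe_mul,
              coe_S, coe_T_zpow, Matrix.eta_fin_two γ.1, ha, hb, hc, hd, Matrix.mul_fin_two,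
              Matrix.mul_fin_two]
            norm_num
          rw [this, ← Tpow]
          exact mul_mem (pow_mem hSC 2) (zpow_mem hT2C (-m))
      · obtain ⟨q, hq⟩ := reduce (γ.1 0 0) (γ.1 1 0) hc (parity γ hγ)
        set δ := S * (T^(2*(-q)) * γ) with hδ
        have hδΓ : δ ∈ Hsub.comap fmod := by
          rw [hδ, ← Tpow]
          exact mul_mem hSΓ (mul_mem (zpow_mem hT2Γ (-q)) hγ)
        have hδc : δ.1 1 0 = γ.1 0 0 - 2*q*γ.1 1 0 := key q γ
        have hδC : δ ∈ C := by
          refine ih (δ.1 1 0).natAbs ?_ δ hδΓ rfl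
          rw [hδc, ← hn]
          rw [Int.abs_eq_natAbs, Int.abs_eq_natAbs] at hq
          exact_mod_cast hq
        have hγδ : γ = T^(2*q) * (S⁻¹ * δ) := by
          rw [hδ]
          have : (2:ℤ)*(-q) = -(2*q) := by ring
          rw [this, _root_.zpow_neg]
          group
        rw [hγδ, ← Tpow]
        exact mul_mem (zpow_mem hT2C q) (mul_mem (inv_mem hSC) hδC)
  refine ⟨Hsub.comap fmod, mem_iff', index_eq', ?_⟩
  apply le_antisymm
  · intro γ hγ
    exact main (γ.1 1 0).natAbs γ hγ rfl
  · rw [hC]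
    apply Subgroup.closure_le _ |>.mpr
    rintro x (rfl | rfl)
    · exact hSΓ
    · exact hT2Γ
end
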